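/- arXiv:math/9607219 — 5 statements merged into one kernel-verified Lean document; each statement's English description precedes it below -/
import Mathlib

section
/- Let V be a Polish space, let K be a compact topological group acting continuously on V on the right, and let h : V → V be a continuous map commuting with the K-action (i.e., h(v · k) = h(v) · k for all v ∈ V, k ∈ K). Let (X, μ) be a probability space, T : X → X a measurable measure-preserving map, and ψ : X → V a Borel measurable function such that for μ-almost every x ∈ X, ψ(T x) lies in the K-orbit of h(ψ(x)), i.e., ψ(T x) ∈ { h(ψ(x)) · k : k ∈ K }. Then there exists a probability Borel measure ν on V that is h-invariant (the pushforward of ν under h equals ν) and whose support contains the support of the pushforward measure ψ_*μ (the essential range of ψ). -/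
/-!
Average `ψ_*μ` along the `K`-orbits: let `ν` be the image of `ψ_*μ ⊗ λ` under the action, `λ`
the Haar probability measure of `K`. By left invariance of `λ`, the orbit average of a measure on
`V` depends only on its image in the orbit space. As `h` is equivariant, `h_*ν` is the orbit
average of `(h ∘ ψ)_*μ`, hence of `(ψ ∘ T)_*μ = ψ_*μ`, which is `ν`. Since `v · 1 = v` and `λ`
charges every neighbourhood of `1`, averaging can only enlarge the support.
-/

open MeasureTheory Function

namespace MeasureTheory.Measure

variable {α β : Type*} [TopologicalSpace α] [MeasurableSpace α]
  [TopologicalSpace β] [MeasurableSpace β]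

lemma image_support_subset_support_map {μ : Measure α} {f : α → β} (hf : Continuous f)
    (hfm : AEMeasurable f μ) : f '' μ.support ⊆ (μ.map f).support := by
  rintro _ ⟨x, hx, rfl⟩
  rw [mem_support_iff_forall] at hx ⊢
  intro U hU
  exact (hx _ (hf.continuousAt.preimage_mem_nhds hU)).trans_le (le_map_apply hfm U)

lemma prod_support_subset_support_prod (μ : Measure α) (ν : Measure β) [SFinite ν] :
    μ.support ×ˢ ν.support ⊆ (μ.prod ν).support := by
  rintro ⟨x, y⟩ ⟨hx, hy⟩
  rw [mem_support_iff_forall] at hx hy ⊢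
  intro U hU
  obtain ⟨u, hu, v, hv, huv⟩ := mem_nhds_prod_iff.mp hU
  calc 0 < μ u * ν v := ENNReal.mul_pos (hx u hu).ne' (hy v hv).ne'
    _ = μ.prod ν (u ×ˢ v) := (prod_prod u v).symm
    _ ≤ μ.prod ν U := measure_mono huv

end MeasureTheory.Measure

section OrbitAverage

variable {V K X : Type*} [MeasurableSpace K] {act : V → K → V} {lam : Measure K}

lemma measure_setOf_act_act_mem [Group K] [MeasurableMul K] [lam.IsMulLeftInvariant]
    (hact_mul : ∀ v k k', act (act v k) k' = act v (k * k')) (s : Set V) (v : V) (k₀ : K) :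
    lam {k | act (act v k₀) k ∈ s} = lam {k | act v k ∈ s} := by
  simp only [hact_mul]
  exact measure_preimage_mul lam k₀ {k | act v k ∈ s}

variable [MeasurableSpace V]

noncomputable def orbitAverage (act : V → K → V) (lam : Measure K) (m : Measure V) :
    Measure V :=
  (m.prod lam).map (uncurry act)

lemma isProbabilityMeasure_orbitAverage [IsProbabilityMeasure lam]
    (hact : Measurable (uncurry act)) (m : Measure V) [IsProbabilityMeasure m] :
    IsProbabilityMeasure (orbitAverage act lam m) :=
  Measure.isProbabilityMeasure_map hact.aemeasurable

lemma orbitAverage_apply [SFinite lam] (hact : Measurable (uncurry act)) (m : Measure V)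
    {s : Set V} (hs : MeasurableSet s) :
    orbitAverage act lam m s = ∫⁻ v, lam {k | act v k ∈ s} ∂m := by
  rw [orbitAverage, Measure.map_apply hact hs, Measure.prod_apply (hact hs)]
  rfl

lemma orbitAverage_map_eq_of_ae_mem_orbit [Group K] [MeasurableMul K] [SFinite lam]
    [lam.IsMulLeftInvariant] [MeasurableSpace X] {μ : Measure X} (hact : Measurable (uncurry act))
    (hact_mul : ∀ v k k', act (act v k) k' = act v (k * k')) {f g : X → V}
    (hf : Measurable f) (hg : Measurable g) (hfg : ∀ᵐ x ∂μ, ∃ k, g x = act (f x) k) :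
    orbitAverage act lam (μ.map g) = orbitAverage act lam (μ.map f) := by
  ext s hs
  have hmeas : Measurable fun v => lam {k | act v k ∈ s} :=
    measurable_measure_prodMk_left (hact hs)
  rw [orbitAverage_apply hact _ hs, orbitAverage_apply hact _ hs,
    lintegral_map hmeas hg, lintegral_map hmeas hf]
  refine lintegral_congr_ae (hfg.mono fun x ⟨k, hk⟩ => ?_)
  dsimp only
  rw [hk, measure_setOf_act_act_mem hact_mul]

lemma map_orbitAverage [SFinite lam] {m : Measure V} [SFinite m]
    (hact : Measurable (uncurry act)) {h : V → V} (hh : Measurable h)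
    (hcomm : ∀ v k, h (act v k) = act (h v) k) :
    (orbitAverage act lam m).map h = orbitAverage act lam (m.map h) := by
  have hcomp : h ∘ uncurry act = uncurry act ∘ Prod.map h id := funext fun p => hcomm p.1 p.2
  rw [orbitAverage, orbitAverage, Measure.map_map hh hact, hcomp, ← Measure.map_map hact
    (hh.prodMap measurable_id), ← Measure.map_prod_map _ _ hh measurable_id, Measure.map_id]

lemma support_subset_support_orbitAverage [TopologicalSpace V] [TopologicalSpace K] [One K]
    [SFinite lam] [lam.IsOpenPosMeasure] (m : Measure V) (hact : Continuous (uncurry act))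
    (hact_meas : Measurable (uncurry act)) (hact_one : ∀ v, act v 1 = v) :
    m.support ⊆ (orbitAverage act lam m).support := by
  intro v hv
  have hmem : (v, (1 : K)) ∈ m.support ×ˢ lam.support := ⟨hv, by simp [Measure.support_eq_univ]⟩
  simpa [orbitAverage, hact_one] using
    Measure.image_support_subset_support_map hact hact_meas.aemeasurable
      ⟨_, Measure.prod_support_subset_support_prod m lam hmem, rfl⟩

end OrbitAverage

lemma exists_isHaarMeasure_isProbabilityMeasure {K : Type*} [Group K] [TopologicalSpace K]
    [IsTopologicalGroup K] [CompactSpace K] [MeasurableSpace K] [BorelSpace K] :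
    ∃ lam : Measure K, lam.IsHaarMeasure ∧ IsProbabilityMeasure lam := by
  refine ⟨Measure.haarMeasure ⊤, inferInstance, ⟨?_⟩⟩
  rw [← TopologicalSpace.PositiveCompacts.coe_top]
  exact Measure.haarMeasure_self

/-- Let `V` be a Polish space with a continuous right action of a compact
group `K`, and `h : V → V` a continuous map commuting with the `K`-action. If `T` is a
measure-preserving map of a probability space `(X, μ)` and `ψ : X → V` is Borel with
`ψ(Tx)` in the `K`-orbit of `h(ψ(x))` for a.e. `x`, then there is an `h`-invariant Borel
probability measure `ν` on `V` whose support contains the support of `ψ_*μ`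
(the essential range of `ψ`). Here the support of a measure is described as the set of
points all of whose open neighbourhoods have nonzero measure. -/
theorem exists_invariant_measure_supported_on_essential_range
    {V K X : Type*}
    [TopologicalSpace V] [PolishSpace V] [MeasurableSpace V] [BorelSpace V]
    [Group K] [TopologicalSpace K] [IsTopologicalGroup K] [CompactSpace K]
    (act : V → K → V)
    (hact_cont : Continuous fun p : V × K => act p.1 p.2)
    (hact_one : ∀ v, act v 1 = v)
    (hact_mul : ∀ v k k', act (act v k) k' = act v (k * k'))
    (h : V → V) (hh_cont : Continuous h)
    (hcomm : ∀ v k, h (act v k) = act (h v) k)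
    [MeasurableSpace X] (μ : Measure X) [IsProbabilityMeasure μ]
    (T : X → X) (hT : MeasurePreserving T μ μ)
    (ψ : X → V) (hψ : Measurable ψ)
    (horb : ∀ᵐ x ∂μ, ∃ k : K, ψ (T x) = act (h (ψ x)) k) :
    ∃ ν : Measure V, IsProbabilityMeasure ν ∧ ν.map h = ν ∧
      {v : V | ∀ U : Set V, IsOpen U → v ∈ U → (μ.map ψ) U ≠ 0} ⊆
        {v : V | ∀ U : Set V, IsOpen U → v ∈ U → ν U ≠ 0} := by
  borelize K
  obtain ⟨lam, _, _⟩ := exists_isHaarMeasure_isProbabilityMeasure (K := K)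
  -- `V` is second countable, so the Borel σ-algebra of `V × K` is the product one.
  have hact : Measurable (uncurry act) := hact_cont.measurable
  have hh := hh_cont.measurable
  have := Measure.isProbabilityMeasure_map (μ := μ) hψ.aemeasurable
  refine ⟨orbitAverage act lam (μ.map ψ), isProbabilityMeasure_orbitAverage hact _, ?_, ?_⟩
  · calc (orbitAverage act lam (μ.map ψ)).map h
        = orbitAverage act lam (μ.map (h ∘ ψ)) := by
          rw [map_orbitAverage hact hh hcomm, Measure.map_map hh hψ]
      _ = orbitAverage act lam (μ.map (ψ ∘ T)) :=
          (orbitAverage_map_eq_of_ae_mem_orbit hact hact_mul (hh.comp hψ) (hψ.comp hT.measurable)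
            horb).symm
      _ = orbitAverage act lam (μ.map ψ) := by rw [← Measure.map_map hψ hT.measurable, hT.map_eq]
  · have hsupport (m : Measure V) :
        {v : V | ∀ U : Set V, IsOpen U → v ∈ U → m U ≠ 0} = m.support := by
      ext v
      simp only [Measure.support_eq_forall_isOpen, pos_iff_ne_zero, Set.mem_ofPred_eq]
      exact forall_congr' fun _ => Imp.swap
    rw [hsupport, hsupport]
    exact support_subset_support_orbitAverage _ hact_cont hact hact_one
end

section
/- Let n be a positive integer, let K be a compact subgroup of GL_n(ℝ), let c : ℝ → GL_n(ℝ) be a continuous group homomorphism (a one-parameter subgroup) whose image is contained in K, and let a ∈ K be an element such that a⁻¹ · c(t) · a = c(2t) for all t ∈ ℝ. Then c is trivial: c(t) = 1 for all t ∈ ℝ. -/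
/-- If `K` is a compact subgroup of `GL_n(ℝ)`, `c : ℝ → GL_n(ℝ)` is a
continuous one-parameter subgroup with image contained in `K`, and `a ∈ K` satisfies
`a⁻¹ · c(t) · a = c(2t)` for all `t`, then `c` is trivial. -/
theorem one_parameter_subgroup_trivial_of_conj_double
    {n : ℕ} (hn : 0 < n)
    (K : Subgroup (GL (Fin n) ℝ)) (hK : IsCompact (K : Set (GL (Fin n) ℝ)))
    (c : ℝ → GL (Fin n) ℝ)
    (hc_cont : Continuous c)
    (hc_hom : ∀ s t : ℝ, c (s + t) = c s * c t)
    (hc_range : ∀ t : ℝ, c t ∈ K)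
    (a : GL (Fin n) ℝ) (ha : a ∈ K)
    (hconj : ∀ t : ℝ, a⁻¹ * c t * a = c (2 * t)) :
    ∀ t : ℝ, c t = 1 := by
  have h0 : c 0 = 1 := by
    have h := hc_hom 0 0
    rw [add_zero] at h
    exact (left_eq_mul.mp h)
  have hstep : ∀ s : ℝ, c s = a⁻¹ * c (s / 2) * (a⁻¹)⁻¹ := by
    intro s
    have h := hconj (s / 2)
    have h2 : 2 * (s / 2) = s := by ring
    rw [h2] at h
    rw [← h]
    group
  have hiter : ∀ k : ℕ, ∀ s : ℝ,
      c s = (a⁻¹) ^ k * c (s / 2 ^ k) * ((a⁻¹) ^ k)⁻¹ := by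
    intro k
    induction k with
    | zero => simp
    | succ k ih =>
      intro s
      have hd : s / 2 / 2 ^ k = s / 2 ^ (k + 1) := by rw [pow_succ]; ring
      rw [hstep s, ih (s / 2), hd, pow_succ']
      group
  intro t
  haveI : FirstCountableTopology (Matrix (Fin n) (Fin n) ℝ) :=
    inferInstanceAs (FirstCountableTopology (Fin n → Fin n → ℝ))
  haveI : FirstCountableTopology ((Matrix (Fin n) (Fin n) ℝ)ᵐᵒᵖ) :=
    MulOpposite.opHomeomorph.symm.isEmbedding.firstCountableTopology
  haveI : FirstCountableTopology (GL (Fin n) ℝ) :=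
    Units.isEmbedding_embedProduct.firstCountableTopology
  obtain ⟨g, hgK, φ, hφ, hg⟩ :=
    hK.tendsto_subseq (fun k : ℕ => K.pow_mem (K.inv_mem ha) k)
  have h2 : Filter.Tendsto (fun k : ℕ => t / 2 ^ φ k) Filter.atTop (nhds 0) := by
    have hbase : Filter.Tendsto (fun m : ℕ => t / 2 ^ m) Filter.atTop (nhds 0) :=
      Filter.Tendsto.div_atTop tendsto_const_nhds
        (tendsto_pow_atTop_atTop_of_one_lt one_lt_two)
    exact hbase.comp hφ.tendsto_atTop
  have hc1 : Filter.Tendsto (fun k : ℕ => c (t / 2 ^ φ k)) Filter.atTop (nhds 1) := by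
    have := (hc_cont.tendsto 0).comp h2
    rwa [h0] at this
  have hlim : Filter.Tendsto (fun k : ℕ => (a⁻¹) ^ φ k * c (t / 2 ^ φ k) * ((a⁻¹) ^ φ k)⁻¹)
      Filter.atTop (nhds (g * 1 * g⁻¹)) :=
    (hg.mul hc1).mul hg.inv
  have hconst : Filter.Tendsto (fun _ : ℕ => c t) Filter.atTop (nhds (g * 1 * g⁻¹)) :=
    hlim.congr (fun k => (hiter (φ k) t).symm)
  have := tendsto_nhds_unique hconst tendsto_const_nhds
  rw [← this]
  simp
end

section
/- Let N and K be groups, φ : K → Aut(N) an action of K on N by automorphisms, and form the semidirect product N ⋊_φ K with multiplication (n₁, k₁)(n₂, k₂) = (n₁ · φ(k₁)(n₂), k₁k₂). Let Q be a countable group acting measurably on the right on a probability space (X, μ), preserving μ, and let α : X × Q → N ⋊_φ K be a Borel cocycle; write α(x, r) = (𝒮(x, r), 𝒦(x, r)) with 𝒮(x, r) ∈ N and 𝒦(x, r) ∈ K. Assume that for each r ∈ Q the function x ↦ 𝒮(x, r) is μ-almost everywhere equal to a constant n_r ∈ N. Let W be the subgroup of N generated by { n_r : r ∈ Q }, let N_K(W)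 = { k ∈ K : φ(k)(W) = W }, and let C_K(W) = { k ∈ K : φ(k)(w) = w for all w ∈ W } (a normal subgroup of N_K(W)). Then: (i) for each r ∈ Q, 𝒦(x, r) ∈ N_K(W) for μ-almost every x; (ii) for each r ∈ Q, the coset 𝒦(x, r) · C_K(W) in N_K(W)/C_K(W) is μ-almost everywhere equal to a constant κ(r); and (iii) κ : Q → N_K(W)/C_K(W) is a group homomorphism. -/
open MeasureTheory

/-- The normalizer `N_K(W)` of a subgroup `W ≤ N` inside `K`, where `K` acts on `N` by
automorphisms via `φ : K →* MulAut N`: the set of `k ∈ K` with `φ k (W) = W`. -/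
def actionNormalizer {N K : Type*} [Group N] [Group K] (φ : K →* MulAut N)
    (W : Subgroup N) : Subgroup K where
  carrier := {k : K | ∀ w : N, w ∈ W ↔ φ k w ∈ W}
  one_mem' := by intro w; simp
  mul_mem' := by
    intro k₁ k₂ h₁ h₂ w
    simp only [map_mul, MulAut.mul_apply]
    exact (h₂ w).trans (h₁ (φ k₂ w))
  inv_mem' := by
    intro k h w
    have := h (φ k⁻¹ w)
    simpa [map_inv] using this.symm

/-- The centralizer `C_K(W)` of a subgroup `W ≤ N`, viewed as a subgroup of the
normalizer `N_K(W)`: those `k` with `φ k (w) = w` for all `w ∈ W`. -/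
def actionCentralizer {N K : Type*} [Group N] [Group K] (φ : K →* MulAut N)
    (W : Subgroup N) : Subgroup (actionNormalizer φ W) where
  carrier := {k : actionNormalizer φ W | ∀ w ∈ W, φ (k : K) w = w}
  one_mem' := by intro w _; simp
  mul_mem' := by
    intro k₁ k₂ h₁ h₂ w hw
    have hw₂ : φ (k₂ : K) w = w := h₂ w hw
    simp only [Subgroup.coe_mul, map_mul, MulAut.mul_apply, hw₂]
    exact h₁ w hw
  inv_mem' := by
    intro k h w hw
    have hk : φ (k : K) w = w := h w hw
    have h2 : φ ((k : K)⁻¹) (φ (k : K) w) = w := by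
      simp [map_inv, MulAut.inv_def]
    rw [hk] at h2
    simpa using h2

/-- `C_K(W)` is a normal subgroup of `N_K(W)`. -/
instance actionCentralizer_normal {N K : Type*} [Group N] [Group K] (φ : K →* MulAut N)
    (W : Subgroup N) : (actionCentralizer φ W).Normal := by
  constructor
  intro c hc g w hw
  have hg : ∀ w : N, w ∈ W ↔ φ (g : K) w ∈ W := g.2
  have hginv : φ ((g : K))⁻¹ w ∈ W := by
    have := (actionNormalizer φ W).inv_mem g.2
    exact ((this w).mp hw)
  have hc' : φ (c : K) (φ ((g : K))⁻¹ w) = φ ((g : K))⁻¹ w := by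
    have := hc (φ ((g : K))⁻¹ w) (by simpa [map_inv] using hginv)
    simpa [map_inv] using this
  calc φ ((g * c * g⁻¹ : actionNormalizer φ W) : K) w
      = φ (g : K) (φ (c : K) (φ ((g : K))⁻¹ w)) := by
        simp [map_mul, map_inv, MulAut.mul_apply]
    _ = φ (g : K) (φ ((g : K))⁻¹ w) := by rw [hc']
    _ = w := by simp [map_inv]

section AuxLemmas

variable {N K : Type*} [Group N] [Group K] (φ : K →* MulAut N)

lemma auxA_mapsTo (W : Subgroup N) (s : Set N) (hW : W = Subgroup.closure s) (k : K)
    (h : ∀ x ∈ s, φ k x ∈ W) : ∀ w ∈ W, φ k w ∈ W := by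
  have hle : Subgroup.closure s ≤ W.comap (φ k : N →* N) :=
    (Subgroup.closure_le _).2 fun x hx => h x hx
  intro w hw
  exact hle (hW ▸ hw)

lemma auxA_mem_normalizer (W : Subgroup N) (s : Set N) (hW : W = Subgroup.closure s) (k : K)
    (h1 : ∀ x ∈ s, φ k x ∈ W) (h2 : ∀ x ∈ s, φ k⁻¹ x ∈ W) :
    k ∈ actionNormalizer φ W := by
  show ∀ w : N, w ∈ W ↔ φ k w ∈ W
  intro w
  constructor
  · exact auxA_mapsTo φ W s hW k h1 w
  · intro hw'
    have := auxA_mapsTo φ W s hW k⁻¹ h2 (φ k w) hw'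
    simpa [map_inv, MulAut.inv_def] using this

lemma auxA_coset_eq (W : Subgroup N) (s : Set N) (hW : W = Subgroup.closure s)
    {k₁ k₂ : K} (h₁ : k₁ ∈ actionNormalizer φ W) (h₂ : k₂ ∈ actionNormalizer φ W)
    (h : ∀ x ∈ s, φ k₁ x = φ k₂ x) :
    (QuotientGroup.mk (⟨k₁, h₁⟩ : actionNormalizer φ W)
        : (actionNormalizer φ W) ⧸ (actionCentralizer φ W)) =
      QuotientGroup.mk (⟨k₂, h₂⟩ : actionNormalizer φ W) := by
  rw [QuotientGroup.eq]
  show ∀ w ∈ W, φ (((⟨k₁, h₁⟩ : actionNormalizer φ W)⁻¹ * ⟨k₂, h₂⟩ : actionNormalizer φ W) : K) w = w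
  intro w hw
  have heq : Set.EqOn (φ k₁ : N →* N) (φ k₂ : N →* N) (Subgroup.closure s) :=
    MonoidHom.eqOn_closure h
  have hww : φ k₁ w = φ k₂ w := heq (hW ▸ hw)
  have hco : (((⟨k₁, h₁⟩ : actionNormalizer φ W)⁻¹ * ⟨k₂, h₂⟩ : actionNormalizer φ W) : K)
      = k₁⁻¹ * k₂ := rfl
  rw [hco]
  have : φ k₁⁻¹ (φ k₂ w) = w := by rw [← hww]; simp [map_inv, MulAut.inv_def]
  simpa [map_mul, MulAut.mul_apply] using this

end AuxLemmas

/-- Let `α : X × Q → N ⋊[φ] K` be a Borel cocycle over a measure-preserving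
right action of a countable group `Q` on a probability space `(X, μ)`, with components
`𝒮(x, r) = (α x r).left` and `𝒦(x, r) = (α x r).right`, such that each `x ↦ 𝒮(x, r)` is
a.e. equal to a constant `n r`. Let `W = ⟨n r : r ∈ Q⟩ ≤ N`. Then (i) for each `r`,
`𝒦(x, r) ∈ N_K(W)` a.e.; and (ii), (iii): there is a group homomorphism
`κ : Q →* N_K(W) / C_K(W)` such that for each `r`, the coset of `𝒦(x, r)` is a.e. equal
to `κ r`. -/
theorem semidirect_cocycle_right_component_homomorphism_mod_centralizer
    {N K Q X : Type*} [Group N] [Group K] [Group Q] [Countable Q]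
    (φ : K →* MulAut N)
    [MeasurableSpace X] [MeasurableSpace Q] [MeasurableSpace (N ⋊[φ] K)]
    (μ : Measure X) [IsProbabilityMeasure μ]
    (a : X → Q → X)
    (ha_one : ∀ x, a x 1 = x)
    (ha_mul : ∀ x r s, a (a x r) s = a x (r * s))
    (ha_mp : ∀ r : Q, MeasurePreserving (fun x => a x r) μ μ)
    (α : X → Q → N ⋊[φ] K)
    (hα_meas : Measurable fun p : X × Q => α p.1 p.2)
    (hα_cocycle : ∀ r s : Q, ∀ᵐ x ∂μ, α x (r * s) = α x r * α (a x r) s)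
    (n : Q → N)
    (hconst : ∀ r : Q, ∀ᵐ x ∂μ, (α x r).left = n r)
    (W : Subgroup N) (hW : W = Subgroup.closure (Set.range n)) :
    (∀ r : Q, ∀ᵐ x ∂μ, (α x r).right ∈ actionNormalizer φ W) ∧
      ∃ κ : Q →* (actionNormalizer φ W) ⧸ (actionCentralizer φ W),
        ∀ r : Q, ∀ᵐ x ∂μ, ∃ h : (α x r).right ∈ actionNormalizer φ W,
          (QuotientGroup.mk (⟨(α x r).right, h⟩ : actionNormalizer φ W)
              : (actionNormalizer φ W) ⧸ (actionCentralizer φ W)) = κ r := by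
  have hnW : ∀ t : Q, n t ∈ W := fun t => hW ▸ Subgroup.subset_closure ⟨t, rfl⟩
  have hpull : ∀ (r : Q) {P : X → Prop}, (∀ᵐ x ∂μ, P x) → ∀ᵐ x ∂μ, P (a x r) :=
    fun r _ h => ((ha_mp r).quasiMeasurePreserving.tendsto_ae).eventually h
  -- the key constancy relation
  have h2 : ∀ r s : Q, ∀ᵐ x ∂μ, φ ((α x r).right) (n s) = (n r)⁻¹ * n (r * s) := by
    intro r s
    filter_upwards [hα_cocycle r s, hconst (r * s), hconst r, hpull r (hconst s)]
      with x hc e1 e2 e3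
    have hl : (α x (r * s)).left = (α x r).left * φ ((α x r).right) ((α (a x r) s).left) := by
      rw [hc]; rfl
    rw [e1, e2, e3] at hl
    rw [hl, inv_mul_cancel_left]
  -- α x 1 = 1 a.e.
  have hone : ∀ᵐ x ∂μ, α x 1 = 1 := by
    filter_upwards [hα_cocycle 1 1] with x hc
    rw [mul_one, ha_one] at hc
    have : α x 1 * 1 = α x 1 * α x 1 := by rw [mul_one]; exact hc
    exact (mul_left_cancel this).symm
  -- inverse relation
  have hinv : ∀ r : Q, ∀ᵐ x ∂μ, (α (a x r) r⁻¹).right = ((α x r).right)⁻¹ := by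
    intro r
    filter_upwards [hα_cocycle r r⁻¹, hone] with x hc h1
    rw [mul_inv_cancel, h1] at hc
    have hr : (α x r).right * (α (a x r) r⁻¹).right = 1 := by
      have := congrArg SemidirectProduct.right hc.symm
      simpa [SemidirectProduct.mul_right] using this
    exact eq_inv_of_mul_eq_one_right hr
  have h2inv : ∀ r s : Q, ∀ᵐ x ∂μ, φ (((α x r).right)⁻¹) (n s) ∈ W := by
    intro r s
    filter_upwards [hpull r (h2 r⁻¹ s), hinv r] with x hx hi
    rw [hi] at hx
    rw [hx]
    exact W.mul_mem (W.inv_mem (hnW _)) (hnW _)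
  -- normalizer membership + constancy, packaged
  have h3 : ∀ r : Q, ∀ᵐ x ∂μ, (α x r).right ∈ actionNormalizer φ W ∧
      ∀ s, φ ((α x r).right) (n s) = (n r)⁻¹ * n (r * s) := by
    intro r
    filter_upwards [ae_all_iff.2 (h2 r), ae_all_iff.2 (h2inv r)] with x hA hB
    refine ⟨auxA_mem_normalizer φ W (Set.range n) hW _ ?_ ?_, hA⟩
    · rintro y ⟨s, rfl⟩
      rw [hA s]
      exact W.mul_mem (W.inv_mem (hnW r)) (hnW _)
    · rintro y ⟨s, rfl⟩
      exact hB s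
  -- pick a base point
  obtain ⟨x₀, hx₀⟩ := (ae_all_iff.2 h3).exists
  set κf : Q → (actionNormalizer φ W) ⧸ (actionCentralizer φ W) :=
    fun r => QuotientGroup.mk (⟨(α x₀ r).right, (hx₀ r).1⟩ : actionNormalizer φ W) with hκf
  have hkey : ∀ r : Q, ∀ᵐ x ∂μ, ∃ h : (α x r).right ∈ actionNormalizer φ W,
      (QuotientGroup.mk (⟨(α x r).right, h⟩ : actionNormalizer φ W)
          : (actionNormalizer φ W) ⧸ (actionCentralizer φ W)) = κf r := by
    intro r
    filter_upwards [h3 r] with x hx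
    refine ⟨hx.1, auxA_coset_eq φ W (Set.range n) hW hx.1 (hx₀ r).1 ?_⟩
    rintro y ⟨s, rfl⟩
    rw [hx.2 s, (hx₀ r).2 s]
  have hmul : ∀ r s : Q, κf (r * s) = κf r * κf s := by
    intro r s
    obtain ⟨x, hc, ⟨hm1, he1⟩, ⟨hm2, he2⟩, hm3, he3⟩ :=
      ((hα_cocycle r s).and ((hkey (r * s)).and ((hkey r).and (hpull r (hkey s))))).exists
    have hr : (α x (r * s)).right = (α x r).right * (α (a x r) s).right := by
      rw [hc]; rfl
    rw [← he1, ← he2, ← he3, ← QuotientGroup.mk_mul]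
    congr 1
    exact Subtype.ext (by simpa using hr)
  exact ⟨fun r => (h3 r).mono fun x hx => hx.1, ⟨MonoidHom.mk' κf hmul, hkey⟩⟩
end

section
/- Let Y be a Polish space and let K be a compact metrizable topological group acting continuously on Y on the right. Let (X, μ) be a probability space, let T : X → X be an ergodic measure-preserving measurable map, and let F : X → Y be a Borel measurable function such that for μ-almost every x ∈ X there exists k ∈ K with F(T x) = F(x) · k. Then there exist a Borel measurable function φ : X → K and a point y₀ ∈ Y such that F(x) · φ(x) = y₀ for μ-almost every x ∈ X. -/
/-!
Since `K` is a group, `F (T x)` and `F x` have the same orbit for a.e. `x`. The orbit map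
`y ↦ y · K` is continuous into the hyperspace `NonemptyCompacts Y` (Vietoris topology), which is
metrizable, so by ergodicity the orbit of `F x` is a.e. a fixed orbit `y₀ · K`. It remains to
write `F x = y₀ · ψ (F x)` with `ψ` Borel: any continuous map `p` out of a compact metrizable
space has a Borel right inverse on its range. By Hausdorff–Alexandroff the source may be taken to
be the Cantor set `C ⊆ ℝ`, and then `y ↦ min (p⁻¹ {y})` works, because
`{y | min (p⁻¹ {y}) ≤ t} = p '' (C ∩ Iic t)` is compact.
-/

open MeasureTheory Set TopologicalSpace

section LeastPreimage

variable {Y : Type*} [TopologicalSpace Y] {A : Set ℝ} [CompactSpace A] {g : A → Y}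

noncomputable def leastPreimage (g : A → Y) (y : Y) : ℝ :=
  sInf (Subtype.val '' (g ⁻¹' {y}))

theorem isCompact_val_preimage_singleton [T1Space Y] (hg : Continuous g) (y : Y) :
    IsCompact (Subtype.val '' (g ⁻¹' {y})) :=
  (isClosed_singleton.preimage hg).isCompact.image continuous_subtype_val

theorem leastPreimage_mem [T1Space Y] (hg : Continuous g) {y : Y} (hy : y ∈ range g) :
    leastPreimage g y ∈ Subtype.val '' (g ⁻¹' {y}) := by
  obtain ⟨a, rfl⟩ := hy
  exact (isCompact_val_preimage_singleton hg _).sInf_mem ⟨a, a, rfl, rfl⟩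

theorem leastPreimage_le_iff [T1Space Y] (hg : Continuous g) {y : Y} (hy : y ∈ range g)
    (t : ℝ) : leastPreimage g y ≤ t ↔ y ∈ g '' {a | (a : ℝ) ≤ t} := by
  constructor
  · intro h
    obtain ⟨b, hb, hb_eq⟩ := leastPreimage_mem hg hy
    exact ⟨b, hb_eq.trans_le h, hb⟩
  · rintro ⟨b, hbt, hb⟩
    exact (csInf_le (isCompact_val_preimage_singleton hg y).bddBelow ⟨b, hb, rfl⟩).trans hbt

variable [T2Space Y] [MeasurableSpace Y] [OpensMeasurableSpace Y]

theorem measurable_leastPreimage (hg : Continuous g) : Measurable (leastPreimage g) := by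
  refine measurable_of_Iic fun t => ?_
  -- off the range, `leastPreimage g y = sInf ∅ = 0`
  have hpre : leastPreimage g ⁻¹' Iic t = g '' {a | (a : ℝ) ≤ t} ∪ (range g)ᶜ ∩ {_y | 0 ≤ t} := by
    ext y
    by_cases hy : y ∈ range g
    · simp [leastPreimage_le_iff hg hy, hy]
    · have hempty : g ⁻¹' {y} = ∅ := eq_empty_of_forall_notMem fun a ha => hy ⟨a, ha⟩
      have hy' : y ∉ g '' {a | (a : ℝ) ≤ t} := fun h => hy (image_subset_range _ _ h)
      simp [leastPreimage, hempty, hy, hy']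
  have hclosed : IsClosed (g '' {a | (a : ℝ) ≤ t}) :=
    ((isClosed_le continuous_subtype_val continuous_const).isCompact.image hg).isClosed
  rw [hpre]
  exact hclosed.measurableSet.union
    ((isCompact_range hg).isClosed.measurableSet.compl.inter (.const _))

theorem Continuous.exists_measurable_rightInvOn_range_of_subset_real [Nonempty A]
    (hg : Continuous g) : ∃ s : Y → A, Measurable s ∧ RightInvOn s g (range g) := by
  have hA : MeasurableSet A :=
    (isCompact_iff_compactSpace.2 ‹CompactSpace A›).isClosed.measurableSet
  obtain ⟨proj, hproj, hproj_eq⟩ := hA.exists_measurable_proj (nonempty_coe_sort.1 ‹Nonempty A›)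
  refine ⟨proj ∘ leastPreimage g, hproj.comp (measurable_leastPreimage hg), fun y hy => ?_⟩
  obtain ⟨a, ha, ha_eq⟩ := leastPreimage_mem hg hy
  simpa [← ha_eq, hproj_eq] using ha

end LeastPreimage

theorem Continuous.exists_measurable_rightInvOn_range {K Y : Type*} [TopologicalSpace K]
    [CompactSpace K] [MetrizableSpace K] [Nonempty K] [MeasurableSpace K] [BorelSpace K]
    [TopologicalSpace Y] [T2Space Y] [MeasurableSpace Y] [OpensMeasurableSpace Y] {p : K → Y}
    (hp : Continuous p) : ∃ s : Y → K, Measurable s ∧ RightInvOn s p (range p) := by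
  let _ := metrizableSpaceMetric K
  obtain ⟨q, hq, hq_surj⟩ := exists_nat_bool_continuous_surjective_of_compact K
  let e := cantorSetHomeomorphNatToBool
  have : CompactSpace cantorSet := isCompact_iff_compactSpace.1 isCompact_cantorSet
  have : Nonempty cantorSet := ⟨⟨0, zero_mem_cantorSet⟩⟩
  obtain ⟨s, hs, hps⟩ :=
    (hp.comp (hq.comp e.continuous)).exists_measurable_rightInvOn_range_of_subset_real
  refine ⟨q ∘ e ∘ s, (hq.comp e.continuous).measurable.comp hs, fun y hy => hps ?_⟩
  rwa [(hq_surj.comp e.surjective).range_comp]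

section Orbit

variable {Y K : Type*} [TopologicalSpace Y] [TopologicalSpace K] [CompactSpace K] {act : Y → K → Y}

def orbitCompacts [Nonempty K] (hact : Continuous (Function.uncurry act)) (y : Y) :
    NonemptyCompacts Y :=
  (⊤ : NonemptyCompacts K).map (act y) (by fun_prop)

@[simp]
theorem coe_orbitCompacts [Nonempty K] (hact : Continuous (Function.uncurry act)) (y : Y) :
    (orbitCompacts hact y : Set Y) = range (act y) := by
  simp [orbitCompacts, image_univ]

theorem continuous_orbitCompacts [Nonempty K] (hact : Continuous (Function.uncurry act)) :
    Continuous (orbitCompacts hact) :=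
  continuous_const.nonemptyCompacts_map' hact

theorem orbitCompacts_act [Group K] (hact : Continuous (Function.uncurry act))
    (hact_mul : ∀ y k k', act (act y k) k' = act y (k * k')) (y : Y) (k : K) :
    orbitCompacts hact (act y k) = orbitCompacts hact y := by
  refine SetLike.coe_injective (Subset.antisymm ?_ ?_) <;> simp only [coe_orbitCompacts]
  · rintro _ ⟨k', rfl⟩
    exact ⟨k * k', (hact_mul y k k').symm⟩
  · rintro _ ⟨k', rfl⟩
    exact ⟨k⁻¹ * k', by rw [hact_mul, mul_inv_cancel_left]⟩

theorem Ergodic.exists_ae_mem_range_act [Group K] [MetrizableSpace Y] [SecondCountableTopology Y]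
    [MeasurableSpace Y] [OpensMeasurableSpace Y] (hact : Continuous (Function.uncurry act))
    (hact_one : ∀ y, act y 1 = y) (hact_mul : ∀ y k k', act (act y k) k' = act y (k * k'))
    {X : Type*} [MeasurableSpace X] {μ : Measure X} [NeZero μ] {T : X → X} (hT : Ergodic T μ)
    {F : X → Y} (hF : Measurable F) (horb : ∀ᵐ x ∂μ, ∃ k : K, F (T x) = act (F x) k) :
    ∃ y₀, ∀ᵐ x ∂μ, F x ∈ range (act y₀) := by
  obtain ⟨x₁⟩ := Measure.nonempty_of_neZero μ
  have : Nonempty (NonemptyCompacts Y) := ⟨orbitCompacts hact (F x₁)⟩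
  obtain ⟨C, hC⟩ := hT.ae_eq_const_of_ae_eq_comp_ae (g := orbitCompacts hact ∘ F)
    ((continuous_orbitCompacts hact).comp_aestronglyMeasurable hF.aestronglyMeasurable) (by
      filter_upwards [horb] with x ⟨k, hk⟩
      simp [hk, orbitCompacts_act hact hact_mul])
  obtain ⟨x₀, hx₀⟩ := hC.exists
  refine ⟨F x₀, ?_⟩
  filter_upwards [hC] with x hx
  have hx : orbitCompacts hact (F x) = orbitCompacts hact (F x₀) := hx.trans hx₀.symm
  rw [← coe_orbitCompacts hact, ← hx, coe_orbitCompacts]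
  exact ⟨1, hact_one _⟩

end Orbit

/-- Let a compact metrizable group `K` act continuously on the right on a
Polish space `Y`, let `T` be an ergodic measure-preserving map of a probability space
`(X, μ)`, and let `F : X → Y` be Borel such that for a.e. `x` the point `F(Tx)` lies in
the `K`-orbit of `F(x)`. Then there are a Borel map `φ : X → K` and a point `y₀ ∈ Y`
with `F(x) · φ(x) = y₀` for a.e. `x`. -/
theorem exists_measurable_trivializing_map_of_ergodic
    {Y K X : Type*}
    [TopologicalSpace Y] [PolishSpace Y] [MeasurableSpace Y] [BorelSpace Y]
    [Group K] [TopologicalSpace K] [IsTopologicalGroup K] [CompactSpace K]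
    [TopologicalSpace.MetrizableSpace K] [MeasurableSpace K] [BorelSpace K]
    (act : Y → K → Y)
    (hact_cont : Continuous fun p : Y × K => act p.1 p.2)
    (hact_one : ∀ y, act y 1 = y)
    (hact_mul : ∀ y k k', act (act y k) k' = act y (k * k'))
    [MeasurableSpace X] (μ : Measure X) [IsProbabilityMeasure μ]
    (T : X → X) (hT : Ergodic T μ)
    (F : X → Y) (hF : Measurable F)
    (horb : ∀ᵐ x ∂μ, ∃ k : K, F (T x) = act (F x) k) :
    ∃ (φ : X → K) (y₀ : Y), Measurable φ ∧ ∀ᵐ x ∂μ, act (F x) (φ x) = y₀ := by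
  obtain ⟨y₀, hy₀⟩ := hT.exists_ae_mem_range_act hact_cont hact_one hact_mul hF horb
  obtain ⟨s, hs, hs_inv⟩ :=
    (hact_cont.comp (Continuous.prodMk_right y₀)).exists_measurable_rightInvOn_range
      (p := act y₀)
  refine ⟨fun x => (s (F x))⁻¹, y₀, (hs.comp hF).inv, ?_⟩
  filter_upwards [hy₀] with x hx
  calc act (F x) (s (F x))⁻¹ = act (act y₀ (s (F x))) (s (F x))⁻¹ := by rw [hs_inv hx]
    _ = y₀ := by rw [hact_mul, mul_inv_cancel, hact_one]
end

section
/- Let F be a field of characteristic zero (for instance ℝ), let V be a finite-dimensional vector space over F, and let e, h, f be linear endomorphisms of V satisfying the sl₂ commutation relations: h∘e − e∘h = 2e, h∘f − f∘h = −2f, and e∘f − f∘e = h. Then for every scalar m ∈ F with m a positive integer (more generally, whenever m is an eigenvalue-parameter with m > 0 in the case F = ℝ), the endomorphism e maps the h-eigenspace for eigenvalue m − 2 onto the h-eigenspace for eigenvalue m; that is, e(ker(h − (m−2)·id)) = ker(h − m·id). -/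
/-- Let `V` be a finite-dimensional real vector space and `e, h, f`
endomorphisms of `V` satisfying the `sl₂` relations `[h,e] = 2e`, `[h,f] = -2f`,
`[e,f] = h`. Then for every real `m > 0`, the endomorphism `e` maps the `h`-eigenspace
for the eigenvalue `m - 2` onto the `h`-eigenspace for the eigenvalue `m`:
`e(ker(h - (m-2)·id)) = ker(h - m·id)`. -/
theorem sl2_raising_operator_surjective_on_positive_eigenspaces
    {V : Type*} [AddCommGroup V] [Module ℝ V] [FiniteDimensional ℝ V]
    (e h f : Module.End ℝ V)
    (rel1 : h * e - e * h = (2 : ℝ) • e)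
    (rel2 : h * f - f * h = (-2 : ℝ) • f)
    (rel3 : e * f - f * e = h)
    (m : ℝ) (hm : 0 < m) :
    Submodule.map e (LinearMap.ker (h - (m - 2) • (1 : Module.End ℝ V))) =
      LinearMap.ker (h - m • (1 : Module.End ℝ V)) := by
  classical
  -- basic raising/lowering facts
  have he_raise : ∀ (μ : ℝ) (v : V), h v = μ • v → h (e v) = (μ + 2) • e v := by
    intro μ v hv
    have h1 : (h * e - e * h) v = ((2 : ℝ) • e) v := by rw [rel1]
    simp only [LinearMap.sub_apply, Module.End.mul_apply, LinearMap.smul_apply] at h1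
    have h2 : h (e v) = e (h v) + (2 : ℝ) • e v := by
      linear_combination (norm := module) h1
    rw [h2, hv, map_smul]
    module
  have hf_lower : ∀ (μ : ℝ) (v : V), h v = μ • v → h (f v) = (μ - 2) • f v := by
    intro μ v hv
    have h1 : (h * f - f * h) v = ((-2 : ℝ) • f) v := by rw [rel2]
    simp only [LinearMap.sub_apply, Module.End.mul_apply, LinearMap.smul_apply] at h1
    have h2 : h (f v) = f (h v) + (-2 : ℝ) • f v := by
      linear_combination (norm := module) h1
    rw [h2, hv, map_smul]
    module
  have hcomm : ∀ v : V, e (f v) - f (e v) = h v := by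
    intro v
    have h1 : (e * f - f * e) v = h v := by rw [rel3]
    simpa using h1
  -- membership characterization
  have hmem : ∀ (μ : ℝ) (v : V),
      v ∈ LinearMap.ker (h - μ • (1 : Module.End ℝ V)) ↔ h v = μ • v := by
    intro μ v
    simp [LinearMap.mem_ker, sub_eq_zero]
  -- the key injectivity statement
  have core : ∀ v : V, h v = m • v → e (f v) = 0 → v = 0 := by
    intro v hv hef
    by_contra hv0
    -- eigenvalue of powers of e applied to v
    have heig : ∀ j : ℕ, h ((e ^ j) v) = (m + 2 * j) • (e ^ j) v := by
      intro j
      induction j with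
      | zero => simpa using hv
      | succ j ih =>
        have hstep : (e ^ (j + 1)) v = e ((e ^ j) v) := by
          rw [pow_succ']; rfl
        rw [hstep, he_raise (m + 2 * j) ((e ^ j) v) ih, ← hstep]
        push_cast
        ring_nf
    -- lowering formula given e (f v) = 0
    have hfe : ∀ j : ℕ, f ((e ^ (j + 1)) v) = (-((j + 1 : ℝ) * (m + j))) • (e ^ j) v := by
      intro j
      induction j with
      | zero =>
        have h1 : (e ^ 1) v = e v := by simp
        have h0 : (e ^ 0) v = v := by simp
        rw [h1, h0]
        have h2 : f (e v) = e (f v) - h v := by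
          have := hcomm v; linear_combination (norm := module) - this
        rw [h2, hef, hv]
        push_cast
        module
      | succ j ih =>
        have hstep : (e ^ (j + 1 + 1)) v = e ((e ^ (j + 1)) v) := by
          rw [pow_succ']; rfl
        rw [hstep]
        have h2 : f (e ((e ^ (j + 1)) v)) =
            e (f ((e ^ (j + 1)) v)) - h ((e ^ (j + 1)) v) := by
          have := hcomm ((e ^ (j + 1)) v)
          linear_combination (norm := module) - this
        rw [h2, ih, map_smul, heig (j + 1)]
        have hstep2 : (e ^ (j + 1)) v = e ((e ^ j) v) := by
          rw [pow_succ']; rfl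
        rw [hstep2]
        push_cast
        module
    -- there is some N with (e ^ N) v = 0
    have hex : ∃ N : ℕ, (e ^ N) v = 0 := by
      by_contra hcon
      push_neg at hcon
      have hsub : Set.range (fun j : ℕ => m + 2 * (j : ℝ)) ⊆
          {μ : ℝ | h.HasEigenvalue μ} := by
        rintro μ ⟨j, rfl⟩
        exact Module.End.hasEigenvalue_of_hasEigenvector
          ⟨Module.End.mem_eigenspace_iff.mpr (heig j), hcon j⟩
      have hinj : Function.Injective (fun j : ℕ => m + 2 * (j : ℝ)) := by
        intro a b hab
        simp only [add_right_inj] at hab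
        exact_mod_cast mul_left_cancel₀ two_ne_zero hab
      exact (Set.infinite_range_of_injective hinj)
        (h.finite_hasEigenvalue.subset hsub)
    -- take minimal such N
    have hN : (e ^ Nat.find hex) v = 0 := Nat.find_spec hex
    have hmin : ∀ k, k < Nat.find hex → (e ^ k) v ≠ 0 := fun k hk => Nat.find_min hex hk
    have hN1 : Nat.find hex ≠ 0 := by
      intro h0
      rw [h0] at hN
      simp at hN
      exact hv0 hN
    obtain ⟨M, hM⟩ : ∃ M, Nat.find hex = M + 1 :=
      ⟨Nat.find hex - 1, (Nat.succ_pred_eq_of_ne_zero hN1).symm⟩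
    rw [hM] at hN
    have hMne : (e ^ M) v ≠ 0 := hmin M (by omega)
    have h0 : (-((M + 1 : ℝ) * (m + M))) • (e ^ M) v = 0 := by
      rw [← hfe M, hN, map_zero]
    have hpos : (0 : ℝ) < ((M : ℝ) + 1) * (m + M) := by
      have : (0 : ℝ) ≤ (M : ℝ) := Nat.cast_nonneg M
      nlinarith
    rcases smul_eq_zero.mp h0 with hc | hc
    · have := neg_eq_zero.mp hc
      exact absurd this (ne_of_gt hpos)
    · exact hMne hc
  -- now the main argument
  set W := LinearMap.ker (h - m • (1 : Module.End ℝ V)) with hW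
  have hmaps : ∀ x : V, x ∈ W → (e * f) x ∈ W := by
    intro x hx
    rw [hmem] at hx ⊢
    have h1 : h (f x) = (m - 2) • f x := hf_lower m x hx
    have h2 : h (e (f x)) = (m - 2 + 2) • e (f x) := he_raise (m - 2) (f x) h1
    simpa using h2
  set g : W →ₗ[ℝ] W := LinearMap.restrict (e * f) hmaps with hg
  have hginj : Function.Injective g := by
    rw [← LinearMap.ker_eq_bot, LinearMap.ker_eq_bot']
    intro ⟨x, hx⟩ hgx
    have hx' : h x = m • x := (hmem m x).mp hx
    have : e (f x) = 0 := by
      have := congrArg (Subtype.val) hgx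
      simpa [hg, LinearMap.restrict_apply] using this
    exact Subtype.ext (core x hx' this)
  have hgsurj : Function.Surjective g := (LinearMap.injective_iff_surjective).mp hginj
  apply le_antisymm
  · rintro _ ⟨x, hx, rfl⟩
    have hx' : h x = (m - 2) • x := (hmem (m - 2) x).mp hx
    exact (hmem m (e x)).mpr (by simpa using he_raise (m - 2) x hx')
  · intro v hv
    obtain ⟨⟨w, hw⟩, hgw⟩ := hgsurj ⟨v, hv⟩
    have hgw' : e (f w) = v := by
      have := congrArg (Subtype.val) hgw
      simpa [hg, LinearMap.restrict_apply] using this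
    exact ⟨f w, (hmem (m - 2) (f w)).mpr (hf_lower m w ((hmem m w).mp hw)), hgw'⟩
end
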